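/- If p̄ ~ q̄ are equivalent sequences of elementary paths and every embedding γ_{ba}: H_a → H_b is a surjective isometry (an isomorphism) for all a ≤ b in K, then the associated operators coincide: χ_{p̄} = χ_{q̄}. -/

import Mathlib

namespace PosetNets

/-- A composable sequence of elementary paths on a partially ordered set `K`,
from a starting point to an ending point.  `up h p` appends an ascending
elementary step `(c,b)̄` (with `b ≤ c`) to `p`, and `down h p` appends a
descending elementary step `(c,b)` (with `c ≤ b`). -/
inductive Path (K : Type) [PartialOrder K] : K → K → Type
  | nil (a : K) : Path K a a
  | up {a b c : K} (h : b ≤ c) (p : Path K a b) : Path K a c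
  | down {a b c : K} (h : c ≤ b) (p : Path K a b) : Path K a c

namespace Path

variable {K : Type} [PartialOrder K]

/-- Concatenation of composable sequences of elementary paths. -/
def comp : ∀ {a b c : K}, Path K b c → Path K a b → Path K a c
  | _, _, _, .nil _, q => q
  | _, _, _, .up h p, q => .up h (p.comp q)
  | _, _, _, .down h p, q => .down h (p.comp q)

/-- The ascending elementary path `(b,a)̄` (for `a ≤ b`), from `a` to `b`. -/
def sUp {a b : K} (h : a ≤ b) : Path K a b := .up h (.nil a)

/-- The descending elementary path `(b,a)` (for `b ≤ a`), from `a` to `b`. -/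
def sDown {a b : K} (h : b ≤ a) : Path K a b := .down h (.nil a)

/-- The reverse sequence `p̄⁻¹ = s₁⁻¹ * ⋯ * sₙ⁻¹` of a sequence
`p̄ = sₙ * ⋯ * s₁` of elementary paths. -/
def reverse : ∀ {a b : K}, Path K a b → Path K b a
  | _, _, .nil a => .nil a
  | _, _, .up h p => p.reverse.comp (sDown h)
  | _, _, .down h p => p.reverse.comp (sUp h)

end Path

/-- The equivalence relation on sequences of elementary paths generated by the
four relations `(a,b)*(b,c) ~ (a,c)`, `(c,b)̄*(b,a)̄ ~ (c,a)̄`,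
`(a,b)*(b,a)̄ ~ i_a`, `(b,a)̄*(a,b) ~ i_b` (for `a ≤ b ≤ c`), applied at any
position of a sequence. -/
inductive PathEquiv {K : Type} [PartialOrder K] : ∀ {a b : K}, Path K a b → Path K a b → Prop
  | refl {a b : K} (p : Path K a b) : PathEquiv p p
  | symm {a b : K} {p q : Path K a b} : PathEquiv p q → PathEquiv q p
  | trans {a b : K} {p q r : Path K a b} : PathEquiv p q → PathEquiv q r → PathEquiv p r
  | comp_congr {a b c : K} {p p' : Path K b c} {q q' : Path K a b} :
      PathEquiv p p' → PathEquiv q q' → PathEquiv (p.comp q) (p'.comp q')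
  | down_down {a b c : K} (h1 : a ≤ b) (h2 : b ≤ c) :
      PathEquiv ((Path.sDown h1).comp (Path.sDown h2)) (Path.sDown (h1.trans h2))
  | up_up {a b c : K} (h1 : a ≤ b) (h2 : b ≤ c) :
      PathEquiv ((Path.sUp h2).comp (Path.sUp h1)) (Path.sUp (h1.trans h2))
  | down_up {a b : K} (h : a ≤ b) :
      PathEquiv ((Path.sDown h).comp (Path.sUp h)) (Path.nil a)
  | up_down {a b : K} (h : a ≤ b) :
      PathEquiv ((Path.sUp h).comp (Path.sDown h)) (Path.nil b)

/-- The set of equivalence classes of loops based at `a`. -/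
def LoopCl (K : Type) [PartialOrder K] (a : K) := Quot (@PathEquiv K _ a a)

end PosetNets

namespace PosetNets

open scoped Classical

/-- A net of Hilbert spaces over the partially ordered set `K`: a family of complex
Hilbert spaces `H a` together with isometric embeddings `γ hab : H a → H b` for
`a ≤ b`, compatible with composition. -/
structure HilbertNet (K : Type) [PartialOrder K] where
  H : K → Type
  [normed : ∀ a : K, NormedAddCommGroup (H a)]
  [ips : ∀ a : K, InnerProductSpace ℂ (H a)]
  [cs : ∀ a : K, CompleteSpace (H a)]
  γ : ∀ {a b : K}, a ≤ b → (H a →ₗᵢ[ℂ] H b)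
  γ_id : ∀ (a : K) (v : H a), γ (le_refl a) v = v
  γ_comp : ∀ {a b c : K} (hab : a ≤ b) (hbc : b ≤ c) (v : H a),
      γ hbc (γ hab v) = γ (hab.trans hbc) v

attribute [instance] HilbertNet.normed HilbertNet.ips HilbertNet.cs

/-- Equality of starting point together with path equivalence, for paths ending at `a`. -/
inductive SPathRel (K : Type) [PartialOrder K] (a : K) :
    (Σ x : K, Path K x a) → (Σ x : K, Path K x a) → Prop
  | mk {x : K} {p q : Path K x a} : PathEquiv p q → SPathRel K a ⟨x, p⟩ ⟨x, q⟩

/-- `S_a`: the set of (equivalence classes of) paths on `K` with ending point `a`. -/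
def PCl (K : Type) [PartialOrder K] (a : K) := Quot (SPathRel K a)

/-- The index set `⨆_{a ∈ K} S_a` for the orthonormal basis of
`H = ⊕_{a∈K} (H_a ⊗ ℓ²(S_a))`. -/
def PIdx (K : Type) [PartialOrder K] := Σ a : K, PCl K a

/-- The Hilbert space `H = ⊕_{a∈K} (H_a ⊗ ℓ²(S_a))`, realized as the ℓ²-direct sum of
copies of `H_a` indexed by the paths ending at `a`, for all `a ∈ K`.  The elementary
tensor `h ⊗ e_p` (for `h ∈ H_a`, `p ∈ S_a`) corresponds to `lp.single 2 ⟨a, p⟩ h`. -/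
noncomputable abbrev BigH {K : Type} [PartialOrder K] (N : HilbertNet K) :=
  lp (fun i : PIdx K => N.H i.1) 2

/-- The map `S_a → S_b`, `p ↦ [(b,a)̄ * p̄]`, for `a ≤ b`. -/
def shiftCl {K : Type} [PartialOrder K] {a b : K} (hab : a ≤ b) : PCl K a → PCl K b :=
  Quot.lift (fun s => Quot.mk _ ⟨s.1, (Path.sUp hab).comp s.2⟩)
    (by
      rintro ⟨x, p⟩ ⟨y, q⟩ h
      cases h with
      | mk h => exact Quot.sound (SPathRel.mk (PathEquiv.comp_congr (PathEquiv.refl _) h)))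

/-- The operator `χ_{p̄}` on `H` associated to a sequence `p̄` of elementary paths:
the composition, along the steps of `p̄`, of the operators `χ_a^b` (ascending steps)
and their adjoints `(χ_a^b)*` (descending steps); the empty sequence `i_a` yields
`χ_a^a` (the projection onto the component `H_a ⊗ ℓ²(S_a)`). -/
noncomputable def chi {K : Type} [PartialOrder K] (N : HilbertNet K)
    (X : ∀ (a b : K), a ≤ b → (BigH N →L[ℂ] BigH N)) :
    ∀ {a b : K}, Path K a b → (BigH N →L[ℂ] BigH N)
  | _, _, .nil a => X a a (le_refl a)
  | _, _, .up (b := b) (c := c) h p => X b c h ∘L chi N X p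
  | _, _, .down (b := b) (c := c) h p =>
      (ContinuousLinearMap.adjoint (X c b h)) ∘L chi N X p

/-- The defining action of the partial isometries `χ_a^b` on the basis vectors
`h ⊗ e_p` with `h ∈ H_a`, `p ∈ S_a`:  `χ_a^b (h ⊗ e_p) = γ_{ba}(h) ⊗ e_{[(b,a)̄ * p̄]}`. -/
def ChiOnBasis {K : Type} [PartialOrder K] (N : HilbertNet K)
    (X : ∀ (a b : K), a ≤ b → (BigH N →L[ℂ] BigH N)) : Prop :=
  ∀ (a b : K) (hab : a ≤ b) (q : PCl K a) (h : N.H a),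
    X a b hab (lp.single 2 (⟨a, q⟩ : PIdx K) h) =
      lp.single 2 (⟨b, shiftCl hab q⟩ : PIdx K) (N.γ hab h)

/-- `χ_a^b` vanishes on the components `H_c ⊗ ℓ²(S_c)` with `c ≠ a`. -/
def ChiVanishes {K : Type} [PartialOrder K] (N : HilbertNet K)
    (X : ∀ (a b : K), a ≤ b → (BigH N →L[ℂ] BigH N)) : Prop :=
  ∀ (a b : K) (hab : a ≤ b) (i : PIdx K) (h : N.H i.1),
    i.1 ≠ a → X a b hab (lp.single 2 i h) = 0



section PathLemmas

variable {K : Type} [PartialOrder K]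

theorem Path.nil_comp {a b : K} (q : Path K a b) : (Path.nil b).comp q = q := by
  simp [Path.comp]

theorem Path.comp_nil {a b : K} (p : Path K a b) : p.comp (Path.nil a) = p := by
  induction p with
  | nil => simp [Path.comp]
  | up h p ih => simp [Path.comp, ih]
  | down h p ih => simp [Path.comp, ih]

theorem Path.comp_assoc {a b c d : K} (p : Path K c d) (q : Path K b c) (r : Path K a b) :
    (p.comp q).comp r = p.comp (q.comp r) := by
  induction p with
  | nil => simp [Path.nil_comp]
  | up h p ih => simp [Path.comp, ih]
  | down h p ih => simp [Path.comp, ih]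

theorem cancel_du {a b : K} (h : a ≤ b) {x : K} (p : Path K x a) :
    PathEquiv ((Path.sDown h).comp ((Path.sUp h).comp p)) p := by
  have e := PathEquiv.comp_congr (PathEquiv.down_up h) (PathEquiv.refl p)
  rw [Path.comp_assoc, Path.nil_comp] at e
  exact e

theorem cancel_ud {a b : K} (h : a ≤ b) {x : K} (p : Path K x b) :
    PathEquiv ((Path.sUp h).comp ((Path.sDown h).comp p)) p := by
  have e := PathEquiv.comp_congr (PathEquiv.up_down h) (PathEquiv.refl p)
  rw [Path.comp_assoc, Path.nil_comp] at e
  exact e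

theorem sUp_refl_equiv {a : K} : PathEquiv (Path.sUp (le_refl a)) (Path.nil a) := by
  have e1 := PathEquiv.comp_congr (PathEquiv.refl (Path.sUp (le_refl a)))
      (PathEquiv.up_down (le_refl a))
  rw [Path.comp_nil, ← Path.comp_assoc] at e1
  have e2 := PathEquiv.comp_congr (PathEquiv.up_up (le_refl a) (le_refl a))
      (PathEquiv.refl (Path.sDown (le_refl a)))
  exact (e1.symm.trans e2).trans (PathEquiv.up_down (le_refl a))

/-- The map `S_b → S_a`, `p ↦ [(b,a) * p̄]`, for `a ≤ b`. -/
def downCl {a b : K} (hab : a ≤ b) : PCl K b → PCl K a :=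
  Quot.lift (fun s => Quot.mk _ ⟨s.1, (Path.sDown hab).comp s.2⟩)
    (by
      rintro ⟨x, p⟩ ⟨y, q⟩ h
      cases h with
      | mk h => exact Quot.sound (SPathRel.mk (PathEquiv.comp_congr (PathEquiv.refl _) h)))

theorem shiftCl_downCl {a b : K} (hab : a ≤ b) (t : PCl K b) :
    shiftCl hab (downCl hab t) = t := by
  induction t using Quot.ind with
  | _ s =>
    obtain ⟨x, r⟩ := s
    exact Quot.sound (SPathRel.mk (cancel_ud hab r))

theorem downCl_shiftCl {a b : K} (hab : a ≤ b) (s : PCl K a) :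
    downCl hab (shiftCl hab s) = s := by
  induction s using Quot.ind with
  | _ s0 =>
    obtain ⟨x, r⟩ := s0
    exact Quot.sound (SPathRel.mk (cancel_du hab r))

theorem shiftCl_refl {a : K} (s : PCl K a) : shiftCl (le_refl a) s = s := by
  induction s using Quot.ind with
  | _ s0 =>
    obtain ⟨x, p⟩ := s0
    refine Quot.sound (SPathRel.mk ?_)
    have e := PathEquiv.comp_congr (sUp_refl_equiv (a := a)) (PathEquiv.refl p)
    rwa [Path.nil_comp] at e

theorem shiftCl_trans {a b c : K} (h1 : a ≤ b) (h2 : b ≤ c) (s : PCl K a) :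
    shiftCl h2 (shiftCl h1 s) = shiftCl (h1.trans h2) s := by
  induction s using Quot.ind with
  | _ s0 =>
    obtain ⟨x, p⟩ := s0
    refine Quot.sound (SPathRel.mk ?_)
    rw [show (Path.sUp h2).comp ((Path.sUp h1).comp p)
        = ((Path.sUp h2).comp (Path.sUp h1)).comp p from (Path.comp_assoc _ _ _).symm]
    exact PathEquiv.comp_congr (PathEquiv.up_up h1 h2) (PathEquiv.refl p)

theorem downCl_trans {a b c : K} (h1 : a ≤ b) (h2 : b ≤ c) (t : PCl K c) :
    downCl h1 (downCl h2 t) = downCl (h1.trans h2) t := by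
  induction t using Quot.ind with
  | _ s0 =>
    obtain ⟨x, p⟩ := s0
    refine Quot.sound (SPathRel.mk ?_)
    rw [show (Path.sDown h1).comp ((Path.sDown h2).comp p)
        = ((Path.sDown h1).comp (Path.sDown h2)).comp p from (Path.comp_assoc _ _ _).symm]
    exact PathEquiv.comp_congr (PathEquiv.down_down h1 h2) (PathEquiv.refl p)

theorem pidx_ne_of_ne_fst {c d : K} {u : PCl K c} {t : PCl K d} (h : c ≠ d) :
    (⟨c, u⟩ : PIdx K) ≠ ⟨d, t⟩ := fun he => h (congrArg Sigma.fst he)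

theorem pidx_snd_eq {c : K} {u t : PCl K c} (he : (⟨c, u⟩ : PIdx K) = ⟨c, t⟩) : u = t := by
  simpa using he

theorem pidx_ne_of_ne_snd {c : K} {u t : PCl K c} (h : u ≠ t) :
    (⟨c, u⟩ : PIdx K) ≠ ⟨c, t⟩ := fun he => h (pidx_snd_eq he)

end PathLemmas


section HilbertLemmas

open scoped InnerProductSpace

variable {K : Type} [PartialOrder K] {N : HilbertNet K}

/-- `γ_{ba}` as a linear isometry equivalence, given surjectivity. -/
noncomputable def gammaE (N : HilbertNet K)
    (hsurj : ∀ {a b : K} (hab : a ≤ b), Function.Surjective (N.γ hab))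
    {a b : K} (hab : a ≤ b) : N.H a ≃ₗᵢ[ℂ] N.H b :=
  LinearIsometryEquiv.ofSurjective (N.γ hab) (hsurj hab)

theorem gammaE_apply (hsurj : ∀ {a b : K} (hab : a ≤ b), Function.Surjective (N.γ hab))
    {a b : K} (hab : a ≤ b) (x : N.H a) : gammaE N hsurj hab x = N.γ hab x := rfl

theorem single_irrel {i1 i2 : DecidableEq (PIdx K)} (i : PIdx K) (x : N.H i.1) :
    (@lp.single (PIdx K) (fun j : PIdx K => N.H j.1) _ i1 2 i x : BigH N)
      = @lp.single (PIdx K) (fun j : PIdx K => N.H j.1) _ i2 2 i x := by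
  have h : i1 = i2 := by funext a b; exact Subsingleton.elim _ _
  subst h; rfl

theorem bigH_single_apply_self {inst : DecidableEq (PIdx K)} (i : PIdx K) (x : N.H i.1) :
    (@lp.single (PIdx K) (fun j : PIdx K => N.H j.1) _ inst 2 i x : BigH N) i = x := by
  rw [lp.single_apply]; exact Pi.single_eq_same (M := fun j : PIdx K => N.H j.1) i x

theorem bigH_single_apply_ne {inst : DecidableEq (PIdx K)} (i : PIdx K) (x : N.H i.1)
    {j : PIdx K} (h : j ≠ i) :
    (@lp.single (PIdx K) (fun j : PIdx K => N.H j.1) _ inst 2 i x : BigH N) j = 0 := by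
  rw [lp.single_apply]; exact Pi.single_eq_of_ne (M := fun j : PIdx K => N.H j.1) h x

theorem bigH_ext_zero (w : BigH N)
    (hw : ∀ (inst : DecidableEq (PIdx K)) (i : PIdx K) (x : N.H i.1),
      ⟪(@lp.single (PIdx K) (fun j : PIdx K => N.H j.1) _ inst 2 i x : BigH N), w⟫_ℂ = 0) :
    w = 0 := by
  refine lp.ext (funext fun i => ?_)
  have h0 := hw (fun a b => Classical.propDecidable _) i (w i)
  rw [lp.inner_single_left] at h0
  simpa using inner_self_eq_zero.mp h0

theorem bigH_op_ext {T S : BigH N →L[ℂ] BigH N}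
    (h : ∀ (inst : DecidableEq (PIdx K)) (i : PIdx K) (x : N.H i.1),
      T (@lp.single (PIdx K) (fun j : PIdx K => N.H j.1) _ inst 2 i x)
        = S (@lp.single (PIdx K) (fun j : PIdx K => N.H j.1) _ inst 2 i x)) : T = S := by
  refine ContinuousLinearMap.ext fun f => ?_
  have hf := lp.hasSum_single (E := fun i : PIdx K => N.H i.1) (p := 2) ENNReal.ofNat_ne_top f
  have hT : HasSum (fun i : PIdx K => T (lp.single 2 i (f i))) (T f) := hf.mapL T
  have hS : HasSum (fun i : PIdx K => S (lp.single 2 i (f i))) (S f) := hf.mapL S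
  simp_rw [h] at hT
  exact hT.unique hS

variable {X : ∀ (a b : K), a ≤ b → (BigH N →L[ℂ] BigH N)}

theorem hX' (hX : ChiOnBasis N X) {inst : DecidableEq (PIdx K)}
    (a b : K) (hab : a ≤ b) (q : PCl K a) (h : N.H a) :
    X a b hab (@lp.single (PIdx K) (fun j : PIdx K => N.H j.1) _ inst 2 (⟨a, q⟩ : PIdx K) h)
      = @lp.single (PIdx K) (fun j : PIdx K => N.H j.1) _ inst 2
          (⟨b, shiftCl hab q⟩ : PIdx K) (N.γ hab h) :=
  (congrArg (X a b hab) (single_irrel _ _)).trans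
    ((hX a b hab q h).trans (single_irrel _ _))

theorem hX0' (hX0 : ChiVanishes N X) {inst : DecidableEq (PIdx K)}
    (a b : K) (hab : a ≤ b) (i : PIdx K) (h : N.H i.1) (hne : i.1 ≠ a) :
    X a b hab (@lp.single (PIdx K) (fun j : PIdx K => N.H j.1) _ inst 2 i h) = 0 :=
  (congrArg (X a b hab) (single_irrel _ _)).trans (hX0 a b hab i h hne)

theorem adjoint_X_single (hX : ChiOnBasis N X) (hX0 : ChiVanishes N X)
    (hsurj : ∀ {a b : K} (hab : a ≤ b), Function.Surjective (N.γ hab))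
    {inst : DecidableEq (PIdx K)} {a b : K} (hab : a ≤ b) (t : PCl K b) (g : N.H b) :
    ContinuousLinearMap.adjoint (X a b hab)
        (@lp.single (PIdx K) (fun j : PIdx K => N.H j.1) _ inst 2 (⟨b, t⟩ : PIdx K) g)
      = @lp.single (PIdx K) (fun j : PIdx K => N.H j.1) _ inst 2
          (⟨a, downCl hab t⟩ : PIdx K) ((gammaE N hsurj hab).symm g) := by
  rw [← sub_eq_zero]
  apply bigH_ext_zero
  intro inst2 j k
  rw [inner_sub_right, sub_eq_zero, ContinuousLinearMap.adjoint_inner_right]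
  obtain ⟨c, u⟩ := j
  by_cases hc : c = a
  · subst hc
    rw [hX' hX c b hab u k]; erw [lp.inner_single_left, lp.inner_single_left]
    by_cases hu : shiftCl hab u = t
    · have hd : downCl hab t = u := by rw [← hu, downCl_shiftCl]
      rw [hu, hd]; erw [bigH_single_apply_self, bigH_single_apply_self]
      calc ⟪N.γ hab k, g⟫_ℂ
          = ⟪gammaE N hsurj hab k, gammaE N hsurj hab ((gammaE N hsurj hab).symm g)⟫_ℂ := by
            rw [LinearIsometryEquiv.apply_symm_apply, gammaE_apply]
        _ = ⟪k, (gammaE N hsurj hab).symm g⟫_ℂ := LinearIsometryEquiv.inner_map_map _ _ _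
    · have hne1 : Ne (α := PIdx K) (Sigma.mk b (shiftCl hab u)) (Sigma.mk b t) :=
        pidx_ne_of_ne_snd hu
      have hne2 : Ne (α := PIdx K) (Sigma.mk c u) (Sigma.mk c (downCl hab t)) :=
        pidx_ne_of_ne_snd (fun h' => hu (by rw [h', shiftCl_downCl]))
      erw [bigH_single_apply_ne _ _ hne1, bigH_single_apply_ne _ _ hne2,
        inner_zero_right, inner_zero_right]
  · rw [hX0' hX0 a b hab ⟨c, u⟩ k hc]; erw [lp.inner_single_left,
      bigH_single_apply_ne _ _ (pidx_ne_of_ne_fst hc), inner_zero_left, inner_zero_right]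

theorem adjoint_X_single_ne (hX : ChiOnBasis N X) (hX0 : ChiVanishes N X)
    {inst : DecidableEq (PIdx K)} {a b : K} (hab : a ≤ b) (i : PIdx K) (x : N.H i.1)
    (hib : i.1 ≠ b) :
    ContinuousLinearMap.adjoint (X a b hab)
      (@lp.single (PIdx K) (fun j : PIdx K => N.H j.1) _ inst 2 i x) = 0 := by
  apply bigH_ext_zero
  intro inst2 j k
  rw [ContinuousLinearMap.adjoint_inner_right]
  obtain ⟨d, u⟩ := j
  by_cases hd : d = a
  · subst hd
    rw [hX' hX d b hab u k]; erw [lp.inner_single_left,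
      bigH_single_apply_ne _ _ (fun he => hib (congrArg Sigma.fst he.symm)), inner_zero_right]
  · rw [hX0' hX0 a b hab ⟨d, u⟩ k hd, inner_zero_left]

theorem P_single (hX : ChiOnBasis N X) {inst : DecidableEq (PIdx K)}
    (a : K) (s : PCl K a) (h : N.H a) :
    X a a (le_refl a) (@lp.single (PIdx K) (fun j : PIdx K => N.H j.1) _ inst 2
        (⟨a, s⟩ : PIdx K) h)
      = @lp.single (PIdx K) (fun j : PIdx K => N.H j.1) _ inst 2 (⟨a, s⟩ : PIdx K) h := by
  rw [hX' hX a a (le_refl a) s h, shiftCl_refl, N.γ_id]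

theorem X_absorb (hX : ChiOnBasis N X) (hX0 : ChiVanishes N X)
    {a b : K} (hab : a ≤ b) : X b b (le_refl b) ∘L X a b hab = X a b hab := by
  apply bigH_op_ext
  intro inst i x
  obtain ⟨c, s⟩ := i
  by_cases hc : c = a
  · subst hc
    rw [ContinuousLinearMap.comp_apply, hX' hX c b hab s x, P_single hX]
  · rw [ContinuousLinearMap.comp_apply, hX0' hX0 a b hab ⟨c, s⟩ x hc, map_zero]

theorem adj_absorb (hX : ChiOnBasis N X) (hX0 : ChiVanishes N X)
    (hsurj : ∀ {a b : K} (hab : a ≤ b), Function.Surjective (N.γ hab))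
    {a b : K} (hab : a ≤ b) :
    X a a (le_refl a) ∘L ContinuousLinearMap.adjoint (X a b hab) =
      ContinuousLinearMap.adjoint (X a b hab) := by
  apply bigH_op_ext
  intro inst i x
  obtain ⟨c, t⟩ := i
  by_cases hc : c = b
  · subst hc
    rw [ContinuousLinearMap.comp_apply, adjoint_X_single hX hX0 hsurj hab t x, P_single hX]
  · rw [ContinuousLinearMap.comp_apply, adjoint_X_single_ne hX hX0 hab ⟨c, t⟩ x hc, map_zero]

theorem P_chi (hX : ChiOnBasis N X) (hX0 : ChiVanishes N X)
    (hsurj : ∀ {a b : K} (hab : a ≤ b), Function.Surjective (N.γ hab))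
    {a b : K} (p : Path K a b) :
    X b b (le_refl b) ∘L chi N X p = chi N X p := by
  induction p with
  | nil => simp only [chi]; exact X_absorb hX hX0 (le_refl _)
  | up h p ih =>
    simp only [chi, ← ContinuousLinearMap.comp_assoc, X_absorb hX hX0 h]
  | down h p ih =>
    simp only [chi, ← ContinuousLinearMap.comp_assoc, adj_absorb hX hX0 hsurj h]

theorem chi_comp (hX : ChiOnBasis N X) (hX0 : ChiVanishes N X)
    (hsurj : ∀ {a b : K} (hab : a ≤ b), Function.Surjective (N.γ hab))
    {a b c : K} (p : Path K b c) (q : Path K a b) :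
    chi N X (p.comp q) = chi N X p ∘L chi N X q := by
  induction p generalizing q with
  | nil =>
    rw [Path.nil_comp]
    simp only [chi]
    exact (P_chi hX hX0 hsurj q).symm
  | up h p ih => simp only [Path.comp, chi, ih, ContinuousLinearMap.comp_assoc]
  | down h p ih => simp only [Path.comp, chi, ih, ContinuousLinearMap.comp_assoc]

end HilbertLemmas

section GenLemmas

variable {K : Type} [PartialOrder K] {N : HilbertNet K}
  {X : ∀ (a b : K), a ≤ b → (BigH N →L[ℂ] BigH N)}

theorem gammaE_symm_trans
    (hsurj : ∀ {a b : K} (hab : a ≤ b), Function.Surjective (N.γ hab))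
    {a b c : K} (h1 : a ≤ b) (h2 : b ≤ c) (g : N.H c) :
    (gammaE N hsurj h1).symm ((gammaE N hsurj h2).symm g)
      = (gammaE N hsurj (h1.trans h2)).symm g := by
  apply (gammaE N hsurj (h1.trans h2)).injective
  rw [LinearIsometryEquiv.apply_symm_apply, gammaE_apply, ← N.γ_comp h1 h2,
    ← gammaE_apply hsurj h1, LinearIsometryEquiv.apply_symm_apply,
    ← gammaE_apply hsurj h2, LinearIsometryEquiv.apply_symm_apply]

theorem chi_down_down (hX : ChiOnBasis N X) (hX0 : ChiVanishes N X)
    (hsurj : ∀ {a b : K} (hab : a ≤ b), Function.Surjective (N.γ hab))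
    {a b c : K} (h1 : a ≤ b) (h2 : b ≤ c) :
    chi N X ((Path.sDown h1).comp (Path.sDown h2)) = chi N X (Path.sDown (h1.trans h2)) := by
  rw [chi_comp hX hX0 hsurj]
  apply bigH_op_ext
  intro inst i x
  obtain ⟨d, t⟩ := i
  by_cases hd : d = c
  · subst hd
    simp only [Path.sDown, chi, ContinuousLinearMap.comp_apply]
    rw [P_single hX, adjoint_X_single hX hX0 hsurj h2 t x, P_single hX,
      adjoint_X_single hX hX0 hsurj h1, adjoint_X_single hX hX0 hsurj (h1.trans h2) t x,
      downCl_trans h1 h2 t, gammaE_symm_trans hsurj h1 h2 x]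
  · simp only [Path.sDown, chi, ContinuousLinearMap.comp_apply,
      hX0' hX0 c c (le_refl c) ⟨d, t⟩ x hd, map_zero]

theorem chi_up_up (hX : ChiOnBasis N X) (hX0 : ChiVanishes N X)
    (hsurj : ∀ {a b : K} (hab : a ≤ b), Function.Surjective (N.γ hab))
    {a b c : K} (h1 : a ≤ b) (h2 : b ≤ c) :
    chi N X ((Path.sUp h2).comp (Path.sUp h1)) = chi N X (Path.sUp (h1.trans h2)) := by
  rw [chi_comp hX hX0 hsurj]
  apply bigH_op_ext
  intro inst i x
  obtain ⟨d, s⟩ := i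
  by_cases hd : d = a
  · subst hd
    simp only [Path.sUp, chi, ContinuousLinearMap.comp_apply]
    rw [P_single hX, hX' hX d b h1 s x, P_single hX, hX' hX b c h2,
      hX' hX d c (h1.trans h2) s x, shiftCl_trans h1 h2 s, N.γ_comp h1 h2 x]
  · simp only [Path.sUp, chi, ContinuousLinearMap.comp_apply,
      hX0' hX0 a a (le_refl a) ⟨d, s⟩ x hd, map_zero]

theorem chi_down_up (hX : ChiOnBasis N X) (hX0 : ChiVanishes N X)
    (hsurj : ∀ {a b : K} (hab : a ≤ b), Function.Surjective (N.γ hab))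
    {a b : K} (h : a ≤ b) :
    chi N X ((Path.sDown h).comp (Path.sUp h)) = chi N X (Path.nil a) := by
  rw [chi_comp hX hX0 hsurj]
  apply bigH_op_ext
  intro inst i x
  obtain ⟨d, s⟩ := i
  by_cases hd : d = a
  · subst hd
    simp only [Path.sDown, Path.sUp, chi, ContinuousLinearMap.comp_apply]
    have hg : (gammaE N hsurj h).symm (N.γ h x) = x := by
      rw [← gammaE_apply hsurj h, LinearIsometryEquiv.symm_apply_apply]
    rw [P_single hX, hX' hX d b h s x, P_single hX, adjoint_X_single hX hX0 hsurj h,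
      downCl_shiftCl, hg]
  · simp only [Path.sDown, Path.sUp, chi, ContinuousLinearMap.comp_apply,
      hX0' hX0 a a (le_refl a) ⟨d, s⟩ x hd, map_zero]

theorem chi_up_down (hX : ChiOnBasis N X) (hX0 : ChiVanishes N X)
    (hsurj : ∀ {a b : K} (hab : a ≤ b), Function.Surjective (N.γ hab))
    {a b : K} (h : a ≤ b) :
    chi N X ((Path.sUp h).comp (Path.sDown h)) = chi N X (Path.nil b) := by
  rw [chi_comp hX hX0 hsurj]
  apply bigH_op_ext
  intro inst i x
  obtain ⟨d, t⟩ := i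
  by_cases hd : d = b
  · subst hd
    simp only [Path.sDown, Path.sUp, chi, ContinuousLinearMap.comp_apply]
    have hg : N.γ h ((gammaE N hsurj h).symm x) = x := by
      rw [← gammaE_apply hsurj h, LinearIsometryEquiv.apply_symm_apply]
    rw [P_single hX, adjoint_X_single hX hX0 hsurj h t x, P_single hX,
      hX' hX a d h (downCl h t), shiftCl_downCl, hg]
  · simp only [Path.sDown, Path.sUp, chi, ContinuousLinearMap.comp_apply,
      hX0' hX0 b b (le_refl b) ⟨d, t⟩ x hd, map_zero]

end GenLemmas

/-- If `p̄ ~ q̄` are equivalent sequences of elementary paths, and every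
embedding `γ_{ba} : H_a → H_b` is a surjective isometry (an isomorphism) for all
`a ≤ b` in `K`, then the associated operators coincide: `χ_{p̄} = χ_{q̄}`. -/
theorem chi_eq_of_equiv {K : Type} [PartialOrder K] (N : HilbertNet K)
    (X : ∀ (a b : K), a ≤ b → (BigH N →L[ℂ] BigH N))
    (hX : ChiOnBasis N X) (hX0 : ChiVanishes N X)
    (hsurj : ∀ {a b : K} (hab : a ≤ b), Function.Surjective (N.γ hab))
    {a b : K} {p q : Path K a b} (hpq : PathEquiv p q) :
    chi N X p = chi N X q := by
  induction hpq with
  | refl p => rfl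
  | symm _ ih => exact ih.symm
  | trans _ _ ih1 ih2 => exact ih1.trans ih2
  | comp_congr _ _ ih1 ih2 => rw [chi_comp hX hX0 hsurj, chi_comp hX hX0 hsurj, ih1, ih2]
  | down_down h1 h2 => exact chi_down_down hX hX0 hsurj h1 h2
  | up_up h1 h2 => exact chi_up_up hX hX0 hsurj h1 h2
  | down_up h => exact chi_down_up hX hX0 hsurj h
  | up_down h => exact chi_up_down hX hX0 hsurj h

end PosetNets
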